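/- For all natural numbers n ≥ m ≥ r, the Stirling numbers of the second kind satisfy the recurrence C(m, r) · S(n, m) = ∑_{k=m-r}^{n-r} C(n, k) · S(n-k, r) · S(k, m-r), where C denotes the binomial coefficient and S(n, m) denotes the Stirling number of the second kind. -/

import Mathlib

/-- Stirling numbers of the second kind. -/
def stirling2 : ℕ → ℕ → ℕ
  | 0, 0 => 1
  | 0, _ + 1 => 0
  | _ + 1, 0 => 0
  | n + 1, m + 1 => (m + 1) * stirling2 n (m + 1) + stirling2 n m

/-! Both sides count the partitions of an `n`-set into `m` blocks, `r` of which are marked: the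
right side first chooses the union of the `m - r` unmarked blocks. Formally, the binomial
convolution of `S(·, a)` and `S(·, b)` is `C(a + b, a) S(·, a + b)`, by induction on `n` along
Pascal's rule: the last element lies either in the left or in the right part. -/

open Finset

theorem stirling2_eq_stirlingSecond : ∀ n m, stirling2 n m = Nat.stirlingSecond n m
  | 0, 0 | 0, _ + 1 | _ + 1, 0 => rfl
  | n + 1, m + 1 => by
    rw [stirling2, Nat.stirlingSecond_succ_succ, stirling2_eq_stirlingSecond n (m + 1),
      stirling2_eq_stirlingSecond n m]

namespace Nat

theorem stirlingSecond_zero_right {n : ℕ} (hn : n ≠ 0) :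
    stirlingSecond n 0 = 0 := by
  obtain ⟨n, rfl⟩ := exists_eq_succ_of_ne_zero hn
  rfl

theorem sum_antidiagonal_choose_mul_stirlingSecond_zero_left (n b : ℕ) :
    ∑ ij ∈ antidiagonal n, n.choose ij.1 * (stirlingSecond ij.1 0 * stirlingSecond ij.2 b) =
      stirlingSecond n b := by
  rw [sum_eq_single_of_mem (0, n) (by simp)]
  · simp
  · rintro ⟨i, j⟩ hij hne
    have hi : i ≠ 0 := by rintro rfl; simp_all
    simp [stirlingSecond_zero_right hi]

theorem sum_antidiagonal_choose_mul_stirlingSecond_zero_right (n a : ℕ) :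
    ∑ ij ∈ antidiagonal n, n.choose ij.1 * (stirlingSecond ij.1 a * stirlingSecond ij.2 0) =
      stirlingSecond n a := by
  rw [sum_eq_single_of_mem (n, 0) (by simp)]
  · simp
  · rintro ⟨i, j⟩ hij hne
    have hj : j ≠ 0 := by rintro rfl; simp_all
    simp [stirlingSecond_zero_right hj]

theorem sum_antidiagonal_succ_choose_mul_stirlingSecond_succ (n a b : ℕ) :
    ∑ ij ∈ antidiagonal (n + 1),
        (n + 1).choose ij.1 * (stirlingSecond ij.1 (a + 1) * stirlingSecond ij.2 (b + 1)) =
      (a + b + 2) * ∑ ij ∈ antidiagonal n,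
          n.choose ij.1 * (stirlingSecond ij.1 (a + 1) * stirlingSecond ij.2 (b + 1)) +
        ∑ ij ∈ antidiagonal n,
          n.choose ij.1 * (stirlingSecond ij.1 (a + 1) * stirlingSecond ij.2 b) +
        ∑ ij ∈ antidiagonal n,
          n.choose ij.1 * (stirlingSecond ij.1 a * stirlingSecond ij.2 (b + 1)) := by
  have := sum_antidiagonal_choose_succ_mul (R := ℕ)
    (fun i j => stirlingSecond i (a + 1) * stirlingSecond j (b + 1)) n
  simp only [cast_id] at this
  rw [this, mul_sum, ← sum_add_distrib, ← sum_add_distrib, ← sum_add_distrib]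
  refine sum_congr rfl fun ij hij => ?_
  rw [choose_symm_of_eq_add (mem_antidiagonal.1 hij).symm, stirlingSecond_succ_succ,
    stirlingSecond_succ_succ]
  ring

theorem sum_antidiagonal_choose_mul_stirlingSecond (n a b : ℕ) :
    ∑ ij ∈ antidiagonal n, n.choose ij.1 * (stirlingSecond ij.1 a * stirlingSecond ij.2 b) =
      (a + b).choose a * stirlingSecond n (a + b) := by
  induction n generalizing a b with
  | zero => cases a <;> cases b <;> simp [stirlingSecond_eq_zero_of_lt]
  | succ n ih =>
    rcases a with _ | a
    · simpa using sum_antidiagonal_choose_mul_stirlingSecond_zero_left (n + 1) b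
    rcases b with _ | b
    · simpa using sum_antidiagonal_choose_mul_stirlingSecond_zero_right (n + 1) (a + 1)
    rw [sum_antidiagonal_succ_choose_mul_stirlingSecond_succ, ih, ih, ih,
      show a + 1 + (b + 1) = a + b + 1 + 1 by ring, show a + 1 + b = a + b + 1 by ring,
      show a + (b + 1) = a + b + 1 by ring, stirlingSecond_succ_succ n,
      choose_succ_succ (a + b + 1)]
    ring

end Nat

theorem stirling2_recurrence_general (n m r : ℕ) (hrm : r ≤ m) :
    Nat.choose m r * stirling2 n m =
      ∑ k ∈ Finset.Icc (m - r) (n - r),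
        Nat.choose n k * stirling2 (n - k) r * stirling2 k (m - r) := by
  have h := Nat.sum_antidiagonal_choose_mul_stirlingSecond n (m - r) r
  rw [Nat.sum_antidiagonal_eq_sum_range_succ_mk, Nat.sub_add_cancel hrm, Nat.choose_symm hrm] at h
  simp only [stirling2_eq_stirlingSecond]
  rw [← h]
  refine (sum_congr rfl fun k _ => by ring).trans
    (sum_subset (fun k hk => ?_) fun k hkn hk => ?_).symm
  · simp only [mem_Icc, mem_range] at hk ⊢
    omega
  · have : k < m - r ∨ n - k < r := by
      rw [mem_Icc] at hk
      rw [mem_range] at hkn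
      omega
    rcases this with hk | hk <;> simp [Nat.stirlingSecond_eq_zero_of_lt hk]

theorem stirling2_recurrence (n m r : ℕ) (hrm : r ≤ m) (hmn : m ≤ n) :
    Nat.choose m r * stirling2 n m =
      ∑ k ∈ Finset.Icc (m - r) (n - r),
        Nat.choose n k * stirling2 (n - k) r * stirling2 k (m - r) :=
  stirling2_recurrence_general n m r hrm
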